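/- The Taylor expansion commutes with linear substitution: for any expression A and term N of the resource λ-calculus with promotion, T(A⟨N/x⟩) = T(A)⟨T(N)/x⟩, where T(-) denotes the set of promotion-free approximants and substitution is extended elementwise to sets. -/

import Mathlib

/-- Terms of the resource λ-calculus with promotion (`∂λ`-calculus): in
`app M P Ns`, the bag `[P₁,…,P_k, ℕ^!]` consists of the linear resources `P`
and the promoted (finite, idempotent) sum `ℕ` represented by the list `Ns`. -/
inductive Tm : Type
  | var : ℕ → Tm
  | lam : ℕ → Tm → Tm
  | app : Tm → List Tm → List Tm → Tm

mutual
/-- Linear substitution `A⟨N/x⟩` (a set of terms, sums being idempotent); on a bag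
`[L₁,…,L_k, ℕ^!]` it produces the substitutions in each linear resource together with
the extra summand `[L₁,…,L_k, ℕ⟨N/x⟩, ℕ^!]`. -/
def lsub (x : ℕ) (N : Tm) : Tm → Set Tm
  | .var y => if y = x then {N} else ∅
  | .lam y M => if y = x then ∅ else {A | ∃ M' ∈ lsub x N M, A = Tm.lam y M'}
  | .app M P Q => {A | ∃ M' ∈ lsub x N M, A = Tm.app M' P Q} ∪
      {A | ∃ P' ∈ lsubList x N P, A = Tm.app M P' Q} ∪
      {A | ∃ N' ∈ lsubSum x N Q, A = Tm.app M (P ++ [N']) Q}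
/-- Linear substitution in exactly one element of a list of linear resources. -/
def lsubList (x : ℕ) (N : Tm) : List Tm → Set (List Tm)
  | [] => ∅
  | L :: P => {R | ∃ L' ∈ lsub x N L, R = L' :: P} ∪
      {R | ∃ P' ∈ lsubList x N P, R = L :: P'}
/-- Linear substitution in a sum of terms (union over the summands). -/
def lsubSum (x : ℕ) (N : Tm) : List Tm → Set Tm
  | [] => ∅
  | L :: Ls => lsub x N L ∪ lsubSum x N Ls
end

mutual
/-- The (support of the) Taylor expansion `T(A)`: the set of promotion-free approximants,
obtained by replacing each promoted component `ℕ^!` by an arbitrary finite multiset of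
elements of `T(ℕ)` (bags being multisets, they are closed under permutation). -/
def T : Tm → Set Tm
  | .var y => {.var y}
  | .lam y M => {A | ∃ M' ∈ T M, A = Tm.lam y M'}
  | .app M P Q => {A | ∃ M' ∈ T M, ∃ P' ∈ TList P, ∃ R : List Tm,
      (∀ L ∈ R, L ∈ TSum Q) ∧ ∃ P'' : List Tm, P''.Perm (P' ++ R) ∧ A = Tm.app M' P'' []}
/-- Taylor expansion of a list of linear resources, elementwise. -/
def TList : List Tm → Set (List Tm)
  | [] => {[]}
  | L :: P => {R | ∃ L' ∈ T L, ∃ P' ∈ TList P, R = L' :: P'}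
/-- Taylor expansion of a sum of terms. -/
def TSum : List Tm → Set Tm
  | [] => ∅
  | L :: Ls => T L ∪ TSum Ls
end

/-!
Induction on terms. Expansion and substitution commute constructor by constructor, and the
only real case is a bag `[P, Q^!]`. Up to permutation, its approximants are one approximant of
each `Pᵢ` followed by finitely many approximants of elements of `Q`. Substituting into one entry
of such a list therefore either substitutes into an approximant of some `Pᵢ`, which approximates
`[P⟨N/x⟩, Q^!]`, or into one of the copies drawn from `Q`, which approximates
`[P, Q⟨N/x⟩, Q^!]`: the promoted `Q` still supplies all the other copies.
-/

open List

theorem mem_TSum_iff {Q : List Tm} {A : Tm} : A ∈ TSum Q ↔ ∃ L ∈ Q, A ∈ T L := by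
  induction Q with
  | nil => simp [TSum]
  | cons L Q ih => simp [TSum, ih]

theorem mem_lsubSum_iff {x : ℕ} {N : Tm} {Q : List Tm} {A : Tm} :
    A ∈ lsubSum x N Q ↔ ∃ L ∈ Q, A ∈ lsub x N L := by
  induction Q with
  | nil => simp [lsubSum]
  | cons L Q ih => simp [lsubSum, ih]

theorem mem_lsubList_iff {x : ℕ} {N : Tm} {B D : List Tm} :
    D ∈ lsubList x N B ↔
      ∃ B₁ L B₂ L', L' ∈ lsub x N L ∧ B = B₁ ++ L :: B₂ ∧ D = B₁ ++ L' :: B₂ := by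
  induction B generalizing D with
  | nil => simp [lsubList]
  | cons K B ih =>
    simp only [lsubList, Set.mem_union, Set.mem_ofPred_eq, ih]
    constructor
    · rintro (⟨L', hL', rfl⟩ | ⟨_, ⟨B₁, L, B₂, L', hL', rfl, rfl⟩, rfl⟩)
      · exact ⟨[], K, B, L', hL', rfl, rfl⟩
      · exact ⟨K :: B₁, L, B₂, L', hL', rfl, rfl⟩
    · rintro ⟨_ | ⟨K', B₁⟩, L, B₂, L', hL', hB, rfl⟩ <;>
        simp only [nil_append, cons_append, cons.injEq] at hB <;> obtain ⟨rfl, rfl⟩ := hB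
      · exact Or.inl ⟨L', hL', rfl⟩
      · exact Or.inr ⟨_, ⟨B₁, L, B₂, L', hL', rfl, rfl⟩, rfl⟩

theorem exists_perm_cons_of_mem_lsubList {x : ℕ} {N : Tm} {B D : List Tm}
    (h : D ∈ lsubList x N B) :
    ∃ L L' R, L' ∈ lsub x N L ∧ B.Perm (L :: R) ∧ D.Perm (L' :: R) := by
  obtain ⟨B₁, L, B₂, L', hL', rfl, rfl⟩ := mem_lsubList_iff.1 h
  exact ⟨L, L', B₁ ++ B₂, hL', perm_middle, perm_middle⟩

/-- `T([P, Q^!])`. -/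
def Tbag (P Q : List Tm) : Set (List Tm) :=
  {B | ∃ B' ∈ TList P, ∃ S : List Tm, (∀ L ∈ S, L ∈ TSum Q) ∧ B.Perm (B' ++ S)}

/-- `[P, Q^!]⟨N/x⟩`, as pairs (linear part, promoted sum). -/
def lsubBag (x : ℕ) (N : Tm) (P Q : List Tm) : Set (List Tm × List Tm) :=
  {R | ∃ P' ∈ lsubList x N P, R = (P', Q)} ∪ {R | ∃ N' ∈ lsubSum x N Q, R = (P ++ [N'], Q)}

section Tbag

variable {P Q : List Tm}

theorem Tbag_perm {B B' : List Tm} (h : B.Perm B') (hB' : B' ∈ Tbag P Q) : B ∈ Tbag P Q := by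
  obtain ⟨C, hC, S, hS, hp⟩ := hB'
  exact ⟨C, hC, S, hS, h.trans hp⟩

theorem mem_Tbag_nil {B : List Tm} : B ∈ Tbag [] Q ↔ ∀ L ∈ B, L ∈ TSum Q := by
  constructor
  · rintro ⟨_, rfl, S, hS, hB⟩ L hL
    exact hS L (hB.subset hL)
  · intro h
    exact ⟨[], rfl, B, h, .refl B⟩

theorem mem_Tbag_cons {K : Tm} {B : List Tm} :
    B ∈ Tbag (K :: P) Q ↔ ∃ M ∈ T K, ∃ R ∈ Tbag P Q, B.Perm (M :: R) := by
  constructor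
  · rintro ⟨_, ⟨M, hM, P', hP', rfl⟩, S, hS, hB⟩
    exact ⟨M, hM, P' ++ S, ⟨P', hP', S, hS, .refl _⟩, hB⟩
  · rintro ⟨M, hM, R, ⟨P', hP', S, hS, hR⟩, hB⟩
    exact ⟨M :: P', ⟨M, hM, P', hP', rfl⟩, S, hS, hB.trans (hR.cons M)⟩

theorem cons_mem_Tbag_of_mem_TSum {L : Tm} {R : List Tm} (hL : L ∈ TSum Q)
    (hR : R ∈ Tbag P Q) : L :: R ∈ Tbag P Q := by
  obtain ⟨P', hP', S, hS, hR⟩ := hR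
  refine ⟨P', hP', L :: S, ?_, (hR.cons L).trans perm_middle.symm⟩
  rintro L' (_ | ⟨_, hL'⟩)
  exacts [hL, hS L' hL']

theorem Tbag_swap_subset {K K' : Tm} : Tbag (K :: K' :: P) Q ⊆ Tbag (K' :: K :: P) Q := by
  intro B hB
  obtain ⟨M, hM, R, hR, hB⟩ := mem_Tbag_cons.1 hB
  obtain ⟨M', hM', R', hR', hR⟩ := mem_Tbag_cons.1 hR
  exact mem_Tbag_cons.2 ⟨M', hM', M :: R', mem_Tbag_cons.2 ⟨M, hM, R', hR', .refl _⟩,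
    hB.trans ((hR.cons M).trans (.swap M' M R'))⟩

theorem Tbag_perm_left {P' : List Tm} (h : P.Perm P') : Tbag P Q = Tbag P' Q := by
  induction h with
  | nil => rfl
  | cons K _ ih => ext B; simp only [mem_Tbag_cons, ih]
  | swap K K' P => exact Tbag_swap_subset.antisymm Tbag_swap_subset
  | trans _ _ ih₁ ih₂ => exact ih₁.trans ih₂

theorem cons_mem_Tbag_cases {L : Tm} {R : List Tm} (h : L :: R ∈ Tbag P Q) :
    (∃ P₁ K P₂, P = P₁ ++ K :: P₂ ∧ L ∈ T K ∧ R ∈ Tbag (P₁ ++ P₂) Q) ∨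
      (L ∈ TSum Q ∧ R ∈ Tbag P Q) := by
  induction P generalizing R with
  | nil =>
    rw [mem_Tbag_nil] at h
    exact Or.inr ⟨h L mem_cons_self, mem_Tbag_nil.2 fun L' hL' => h L' (mem_cons_of_mem _ hL')⟩
  | cons K P ih =>
    obtain ⟨M, hM, R', hR', hperm⟩ := mem_Tbag_cons.1 h
    rcases mem_cons.1 (hperm.subset mem_cons_self) with rfl | hL
    · exact Or.inl ⟨[], K, P, rfl, hM, Tbag_perm hperm.cons_inv hR'⟩
    obtain ⟨R₁, R₂, rfl⟩ := append_of_mem hL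
    have hR : R.Perm (M :: (R₁ ++ R₂)) :=
      (hperm.trans ((perm_middle.cons M).trans (.swap L M _))).cons_inv
    rcases ih (Tbag_perm perm_middle.symm hR') with ⟨P₁, K', P₂, rfl, hL, hR₀⟩ | ⟨hL, hR₀⟩
    · exact Or.inl ⟨K :: P₁, K', P₂, rfl, hL, mem_Tbag_cons.2 ⟨M, hM, _, hR₀, hR⟩⟩
    · exact Or.inr ⟨hL, mem_Tbag_cons.2 ⟨M, hM, _, hR₀, hR⟩⟩

theorem exists_mem_Tbag_of_perm_cons {x : ℕ} {N A M : Tm} {D R : List Tm}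
    (hD : D.Perm (M :: R)) (hM : M ∈ lsub x N A) (hR : A :: R ∈ Tbag P Q) :
    ∃ B ∈ Tbag P Q, D ∈ lsubList x N B := by
  obtain ⟨D₁, D₂, rfl⟩ := append_of_mem (hD.symm.subset mem_cons_self)
  have hR' : R.Perm (D₁ ++ D₂) := (hD.symm.trans perm_middle).cons_inv
  exact ⟨D₁ ++ A :: D₂, Tbag_perm (perm_middle.trans (hR'.symm.cons A)) hR,
    mem_lsubList_iff.2 ⟨D₁, A, D₂, M, hM, rfl, rfl⟩⟩

end Tbag

theorem mem_T_app {M C : Tm} {P Q : List Tm} :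
    C ∈ T (.app M P Q) ↔ ∃ M' ∈ T M, ∃ D ∈ Tbag P Q, C = .app M' D [] := by
  simp only [T, Tbag, Set.mem_ofPred_eq]
  constructor
  · rintro ⟨M', hM', P', hP', S, hS, D, hD, rfl⟩
    exact ⟨M', hM', D, ⟨P', hP', S, hS, hD⟩, rfl⟩
  · rintro ⟨M', hM', D, ⟨P', hP', S, hS, hD⟩, rfl⟩
    exact ⟨M', hM', P', hP', S, hS, D, hD, rfl⟩

theorem mem_lsub_app {x : ℕ} {N M C : Tm} {P Q : List Tm} :
    C ∈ lsub x N (.app M P Q) ↔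
      (∃ M' ∈ lsub x N M, C = .app M' P Q) ∨ ∃ R ∈ lsubBag x N P Q, C = .app M R.1 R.2 := by
  simp only [lsub, lsubBag, Set.mem_union, Set.mem_ofPred_eq]
  constructor
  · rintro ((h | ⟨P', hP', rfl⟩) | ⟨N', hN', rfl⟩)
    exacts [.inl h, .inr ⟨_, .inl ⟨P', hP', rfl⟩, rfl⟩, .inr ⟨_, .inr ⟨N', hN', rfl⟩, rfl⟩]
  · rintro (h | ⟨_, ⟨P', hP', rfl⟩ | ⟨N', hN', rfl⟩, rfl⟩)
    exacts [.inl (.inl h), .inl (.inr ⟨P', hP', rfl⟩), .inr ⟨N', hN', rfl⟩]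

theorem mem_lsub_app_nil {x : ℕ} {N M C : Tm} {D : List Tm} :
    C ∈ lsub x N (.app M D []) ↔
      (∃ M' ∈ lsub x N M, C = .app M' D []) ∨ ∃ D' ∈ lsubList x N D, C = .app M D' [] := by
  simp [lsub, lsubSum]

/-- `T(A⟨N/x⟩) = T(A)⟨T(N)/x⟩`, elementwise in the approximants. -/
def CommutesWithTaylor (x : ℕ) (N A : Tm) : Prop :=
  ∀ C, (∃ B ∈ lsub x N A, C ∈ T B) ↔ ∃ A' ∈ T A, ∃ N' ∈ T N, C ∈ lsub x N' A'

section Commutation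

variable {x : ℕ} {N : Tm}

theorem commutesWithTaylor_var (y : ℕ) : CommutesWithTaylor x N (.var y) := by
  intro C
  by_cases h : y = x <;> simp [lsub, T, h]

theorem mem_lsub_lam_of_ne {y : ℕ} {M C : Tm} (h : y ≠ x) :
    C ∈ lsub x N (.lam y M) ↔ ∃ M' ∈ lsub x N M, C = .lam y M' := by
  simp [lsub, h]

theorem commutesWithTaylor_lam {y : ℕ} {M : Tm} (hM : CommutesWithTaylor x N M) :
    CommutesWithTaylor x N (.lam y M) := by
  intro C
  by_cases h : y = x
  · simp [lsub, T, h]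
  simp only [mem_lsub_lam_of_ne h, T, Set.mem_ofPred_eq]
  constructor
  · rintro ⟨_, ⟨M', hM', rfl⟩, M'', hM'', rfl⟩
    obtain ⟨M₀, hM₀, N', hN', hsub⟩ := (hM M'').1 ⟨M', hM', hM''⟩
    exact ⟨_, ⟨M₀, hM₀, rfl⟩, N', hN', (mem_lsub_lam_of_ne h).2 ⟨M'', hsub, rfl⟩⟩
  · rintro ⟨_, ⟨M₀, hM₀, rfl⟩, N', hN', hC⟩
    obtain ⟨M₁, hM₁, rfl⟩ := (mem_lsub_lam_of_ne h).1 hC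
    obtain ⟨M', hM', hM₁T⟩ := (hM M₁).2 ⟨M₀, hM₀, N', hN', hM₁⟩
    exact ⟨_, ⟨M', hM', rfl⟩, M₁, hM₁T, rfl⟩

theorem commutesWithTaylor_sum {Q : List Tm} (hQ : ∀ L ∈ Q, CommutesWithTaylor x N L) (C : Tm) :
    (∃ B ∈ lsubSum x N Q, C ∈ T B) ↔ ∃ A' ∈ TSum Q, ∃ N' ∈ T N, C ∈ lsub x N' A' := by
  simp only [mem_lsubSum_iff, mem_TSum_iff]
  constructor
  · rintro ⟨B, ⟨L, hL, hB⟩, hC⟩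
    obtain ⟨A', hA', h⟩ := (hQ L hL C).1 ⟨B, hB, hC⟩
    exact ⟨A', ⟨L, hL, hA'⟩, h⟩
  · rintro ⟨A', ⟨L, hL, hA'⟩, h⟩
    obtain ⟨B, hB, hC⟩ := (hQ L hL C).2 ⟨A', hA', h⟩
    exact ⟨B, ⟨L, hL, hB⟩, hC⟩

variable {P Q : List Tm}

theorem exists_mem_lsubList_of_mem_Tbag_lsubBag (hP : ∀ L ∈ P, CommutesWithTaylor x N L)
    (hQ : ∀ L ∈ Q, CommutesWithTaylor x N L) {R : List Tm × List Tm} (hR : R ∈ lsubBag x N P Q)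
    {D : List Tm} (hD : D ∈ Tbag R.1 R.2) : ∃ B ∈ Tbag P Q, ∃ N' ∈ T N, D ∈ lsubList x N' B := by
  rcases hR with ⟨P', hP', rfl⟩ | ⟨N₁, hN₁, rfl⟩
  · obtain ⟨P₁, K, P₂, K', hK', rfl, rfl⟩ := mem_lsubList_iff.1 hP'
    rw [Tbag_perm_left perm_middle] at hD
    obtain ⟨M, hM, R, hR, hDR⟩ := mem_Tbag_cons.1 hD
    obtain ⟨K'', hK'', N', hN', hMK⟩ := (hP K (by simp) M).1 ⟨K', hK', hM⟩
    have hKR : K'' :: R ∈ Tbag (P₁ ++ K :: P₂) Q := by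
      rw [Tbag_perm_left perm_middle]
      exact mem_Tbag_cons.2 ⟨K'', hK'', R, hR, .refl _⟩
    obtain ⟨B, hB, hDB⟩ := exists_mem_Tbag_of_perm_cons hDR hMK hKR
    exact ⟨B, hB, N', hN', hDB⟩
  · rw [Tbag_perm_left (perm_append_singleton _ _)] at hD
    obtain ⟨M, hM, R, hR, hDR⟩ := mem_Tbag_cons.1 hD
    obtain ⟨A, hA, N', hN', hMA⟩ := (commutesWithTaylor_sum hQ M).1 ⟨N₁, hN₁, hM⟩
    obtain ⟨B, hB, hDB⟩ :=
      exists_mem_Tbag_of_perm_cons hDR hMA (cons_mem_Tbag_of_mem_TSum hA hR)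
    exact ⟨B, hB, N', hN', hDB⟩

theorem exists_mem_Tbag_lsubBag_of_mem_lsubList (hP : ∀ L ∈ P, CommutesWithTaylor x N L)
    (hQ : ∀ L ∈ Q, CommutesWithTaylor x N L) {B D : List Tm} {N' : Tm} (hB : B ∈ Tbag P Q)
    (hN' : N' ∈ T N) (hD : D ∈ lsubList x N' B) : ∃ R ∈ lsubBag x N P Q, D ∈ Tbag R.1 R.2 := by
  obtain ⟨L, L', R, hL', hBR, hDR⟩ := exists_perm_cons_of_mem_lsubList hD
  rcases cons_mem_Tbag_cases (Tbag_perm hBR.symm hB) with ⟨P₁, K, P₂, rfl, hL, hR⟩ | ⟨hL, hR⟩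
  · obtain ⟨K', hK', hL'K'⟩ := (hP K (by simp) L').2 ⟨L, hL, N', hN', hL'⟩
    refine ⟨(P₁ ++ K' :: P₂, Q),
      .inl ⟨_, mem_lsubList_iff.2 ⟨P₁, K, P₂, K', hK', rfl, rfl⟩, rfl⟩, ?_⟩
    rw [Tbag_perm_left perm_middle]
    exact mem_Tbag_cons.2 ⟨L', hL'K', R, hR, hDR⟩
  · obtain ⟨N₁, hN₁, hL'N₁⟩ := (commutesWithTaylor_sum hQ L').2 ⟨L, hL, N', hN', hL'⟩
    refine ⟨(P ++ [N₁], Q), .inr ⟨N₁, hN₁, rfl⟩, ?_⟩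
    rw [Tbag_perm_left (perm_append_singleton _ _)]
    exact mem_Tbag_cons.2 ⟨L', hL'N₁, R, hR, hDR⟩

theorem commutesWithTaylor_bag (hP : ∀ L ∈ P, CommutesWithTaylor x N L)
    (hQ : ∀ L ∈ Q, CommutesWithTaylor x N L) (D : List Tm) :
    (∃ R ∈ lsubBag x N P Q, D ∈ Tbag R.1 R.2) ↔ ∃ B ∈ Tbag P Q, ∃ N' ∈ T N, D ∈ lsubList x N' B :=
  ⟨fun ⟨_, hR, hD⟩ => exists_mem_lsubList_of_mem_Tbag_lsubBag hP hQ hR hD,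
    fun ⟨_, hB, _, hN', hD⟩ => exists_mem_Tbag_lsubBag_of_mem_lsubList hP hQ hB hN' hD⟩

theorem commutesWithTaylor_app {M : Tm} (hM : CommutesWithTaylor x N M)
    (hP : ∀ L ∈ P, CommutesWithTaylor x N L) (hQ : ∀ L ∈ Q, CommutesWithTaylor x N L) :
    CommutesWithTaylor x N (.app M P Q) := by
  intro C
  constructor
  · rintro ⟨B, hB, hC⟩
    rcases mem_lsub_app.1 hB with ⟨M', hM', rfl⟩ | ⟨R, hR, rfl⟩
    · obtain ⟨M'', hM'', D, hD, rfl⟩ := mem_T_app.1 hC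
      obtain ⟨M₀, hM₀, N', hN', hsub⟩ := (hM M'').1 ⟨M', hM', hM''⟩
      exact ⟨_, mem_T_app.2 ⟨M₀, hM₀, D, hD, rfl⟩, N', hN',
        mem_lsub_app_nil.2 (.inl ⟨M'', hsub, rfl⟩)⟩
    · obtain ⟨M', hM', D, hD, rfl⟩ := mem_T_app.1 hC
      obtain ⟨B, hB, N', hN', hDB⟩ := (commutesWithTaylor_bag hP hQ D).1 ⟨R, hR, hD⟩
      exact ⟨_, mem_T_app.2 ⟨M', hM', B, hB, rfl⟩, N', hN',
        mem_lsub_app_nil.2 (.inr ⟨D, hDB, rfl⟩)⟩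
  · rintro ⟨_, hA, N', hN', hC⟩
    obtain ⟨M₀, hM₀, D, hD, rfl⟩ := mem_T_app.1 hA
    rcases mem_lsub_app_nil.1 hC with ⟨M₀', hsub, rfl⟩ | ⟨D', hD', rfl⟩
    · obtain ⟨M', hM', hM₀'⟩ := (hM M₀').2 ⟨M₀, hM₀, N', hN', hsub⟩
      exact ⟨_, mem_lsub_app.2 (.inl ⟨M', hM', rfl⟩), mem_T_app.2 ⟨M₀', hM₀', D, hD, rfl⟩⟩
    · obtain ⟨R, hR, hD'R⟩ := (commutesWithTaylor_bag hP hQ D').2 ⟨D, hD, N', hN', hD'⟩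
      exact ⟨_, mem_lsub_app.2 (.inr ⟨R, hR, rfl⟩), mem_T_app.2 ⟨M₀, hM₀, D', hD'R, rfl⟩⟩

end Commutation

theorem commutesWithTaylor (x : ℕ) (N : Tm) : ∀ A, CommutesWithTaylor x N A
  | .var _ => commutesWithTaylor_var _
  | .lam _ M => commutesWithTaylor_lam (commutesWithTaylor x N M)
  | .app M P Q => commutesWithTaylor_app (commutesWithTaylor x N M)
      (fun L _ => commutesWithTaylor x N L) (fun L _ => commutesWithTaylor x N L)

/-- The Taylor expansion commutes with linear substitution:
`T(A⟨N/x⟩) = T(A)⟨T(N)/x⟩` for every expression `A` (term or bag) and term `N`,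
substitution being extended elementwise to sets. -/
theorem taylor_commutes_with_linear_substitution (x : ℕ) (N : Tm) :
    (∀ A : Tm, (⋃ B ∈ lsub x N A, T B) = ⋃ A' ∈ T A, ⋃ N' ∈ T N, lsub x N' A') ∧
    (∀ P Q : List Tm,   -- a bag `[P, Q^!]` with linear part `P` and promoted sum `Q`
      (⋃ R ∈ ({R | ∃ P' ∈ lsubList x N P, R = (P', Q)} ∪
              {R | ∃ N' ∈ lsubSum x N Q, R = (P ++ [N'], Q)} :
                Set (List Tm × List Tm)),
        {B : List Tm | ∃ B' ∈ TList R.1, ∃ S : List Tm,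
          (∀ L ∈ S, L ∈ TSum R.2) ∧ B.Perm (B' ++ S)}) =
      ⋃ B' ∈ {B : List Tm | ∃ P' ∈ TList P, ∃ S : List Tm,
          (∀ L ∈ S, L ∈ TSum Q) ∧ B.Perm (P' ++ S)},
        ⋃ N' ∈ T N, lsubList x N' B') := by
  have hAll : ∀ L, CommutesWithTaylor x N L := commutesWithTaylor x N
  refine ⟨fun A => Set.ext fun C => by simpa using hAll A C, fun P Q => Set.ext fun D => ?_⟩
  change D ∈ ⋃ R ∈ lsubBag x N P Q, Tbag R.1 R.2 ↔
    D ∈ ⋃ B ∈ Tbag P Q, ⋃ N' ∈ T N, lsubList x N' B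
  simpa using commutesWithTaylor_bag (fun L _ => hAll L) (fun L _ => hAll L) D
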